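/- Plane waves span the spherical monogenics: let m ≥ 2 and k ∈ ℕ. Every Clifford-valued polynomial map M : ℝ^m → Cl_m that is homogeneous of degree k and monogenic can be written as a finite right-linear combination of monogenic plane waves: there exist finitely many pairs of orthonormal vectors (t_i, s_i) in ℝ^m and elements c_i ∈ Cl_m such that M(x) = Σ_i (⟨x,t_i⟩·1 − ι(t_i)ι(s_i)·⟨x,s_i⟩)^k · c_i for all x ∈ ℝ^m. -/

import Mathlib

open CliffordAlgebra

/-- The quadratic form `Q(x) = -(x₁² + ⋯ + x_m²)` on `ℝ^m`, whose Clifford algebra is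
the real Clifford algebra `Cl_m`. -/
noncomputable def negEuclidQ (m : ℕ) : QuadraticForm ℝ (Fin m → ℝ) :=
  QuadraticMap.weightedSumSquares ℝ (fun _ : Fin m => (-1 : ℝ))

/-- `f : ℝ^m → Cl_m` is a Clifford-valued polynomial map homogeneous of degree `k`:
it is a finite sum `f(x) = ∑_α x^α c_α` with `c_α = 0` unless `|α| = k`. -/
def IsHomogPolyMap (m k : ℕ) (f : (Fin m → ℝ) → CliffordAlgebra (negEuclidQ m)) : Prop :=
  ∃ c : (Fin m →₀ ℕ) →₀ CliffordAlgebra (negEuclidQ m),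
    (∀ α ∈ c.support, (∑ j, α j) = k) ∧
    ∀ x, f x = c.sum fun α a => (∏ j, x j ^ α j) • a

/-- `f : ℝ^m → Cl_m` is (left) monogenic: its partial derivatives `g j = ∂_j f` (characterized
through all `ℝ`-linear functionals on `Cl_m`, which separate points) satisfy
`∑_j ι(ε_j)·(∂_j f)(x) = 0` for all `x`. -/
def IsMonogenic (m : ℕ) (f : (Fin m → ℝ) → CliffordAlgebra (negEuclidQ m)) : Prop :=
  ∃ g : Fin m → (Fin m → ℝ) → CliffordAlgebra (negEuclidQ m),
    (∀ (j : Fin m) (x : Fin m → ℝ) (φ : CliffordAlgebra (negEuclidQ m) →ₗ[ℝ] ℝ),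
      deriv (fun u : ℝ => φ (f (Function.update x j u))) (x j) = φ (g j x)) ∧
    ∀ x : Fin m → ℝ, ∑ j, ι (negEuclidQ m) (Pi.single j 1) * g j x = 0

/-!
Fix a coordinate `d` and work with coefficient families. Two facts drive the proof.

A monogenic polynomial is determined by its restriction to the hyperplane `x_d = 0`: read at the
coefficient of `x^γ`, the equation `∑ e_j ∂_j c = 0` expresses the coefficients with `α_d = n + 1`
through those with `α_d = n`, because `e_d` is invertible.

For `t ⊥ e_d` the plane wave `(⟨x,t⟩ - x_d ι(t) e_d)^k a` (the theorem's plane wave with `s = e_d`)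
is monogenic and restricts to `⟨x,t⟩^k a`. Monogenicity holds because the factor commutes with its
partial derivatives `u_j = t_j - δ_{jd} ι(t) e_d`, so the Dirac operator produces
`∑_j e_j u_j = ι(t) - e_d ι(t) e_d = 0` on the left.

The powers `⟨x,t⟩^k a` with `t_d = 0` span the homogeneous polynomials of degree `k` in the other
variables (`x_i ⟨x,t⟩^k` is the coefficient of `r` in `⟨x, t + r e_i⟩^{k+1}`), so a combination of
plane waves has the same restriction as `M`, hence equals `M`. Rescaling makes each `t` a unit
vector; when `t = 0` and `k = 0` this needs a unit vector orthogonal to `e_d`, hence `m ≥ 2`.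
-/

theorem mul_pow_succ_eq_of_mul_eq_add {R : Type*} [Semiring R] {D P U : R}
    (hDP : D * P = P * D + U) (hUP : Commute U P) (k : ℕ) :
    D * P ^ (k + 1) = P ^ (k + 1) * D + (k + 1) • (U * P ^ k) := by
  induction k with
  | zero => simpa using hDP
  | succ k ih =>
    rw [pow_succ, ← mul_assoc, ih, add_mul, mul_assoc, hDP, mul_add, ← mul_assoc, ← pow_succ,
      smul_mul_assoc, mul_assoc, ← pow_succ, (hUP.pow_right (k + 1)).eq.symm, add_assoc,
      ← succ_nsmul']

theorem Submodule.mem_of_forall_sum_pow_smul_mem {K W : Type*} [Field K] [Infinite K]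
    [AddCommGroup W] [Module K W] (U : Submodule K W) {N : ℕ} {v : ℕ → W}
    (h : ∀ r : K, ∑ l ∈ Finset.range N, r ^ l • v l ∈ U) {l : ℕ} (hl : l < N) : v l ∈ U := by
  rw [← Submodule.Quotient.mk_eq_zero, ← Module.forall_dual_apply_eq_zero_iff K]
  intro φ
  set p : Polynomial K := ∑ i ∈ Finset.range N, Polynomial.monomial i (φ (U.mkQ (v i)))
  have hp : p = 0 := Polynomial.funext fun r => by
    have : φ (U.mkQ (∑ l ∈ Finset.range N, r ^ l • v l)) = 0 := by
      rw [U.mkQ_apply, (Submodule.Quotient.mk_eq_zero U).mpr (h r), map_zero]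
    simpa [p, Polynomial.eval_finsetSum, mul_comm] using this
  simpa [p, Polynomial.finsetSum_coeff, Polynomial.coeff_monomial, hl] using
    congrArg (Polynomial.coeff · l) hp

theorem Finsupp.exists_eq_add_single_of_ne_zero {σ : Type*} {α : σ →₀ ℕ} {j : σ} (h : α j ≠ 0) :
    ∃ β, α = β + Finsupp.single j 1 :=
  le_iff_exists_add'.mp (Finsupp.single_le_iff.mpr (Nat.one_le_iff_ne_zero.mpr h))

namespace CliffordPoly

abbrev Cl (m : ℕ) := CliffordAlgebra (negEuclidQ m)

/-- Polynomial maps `ℝ^m → Cl_m`, encoded by their coefficients: `c α` is the coefficient of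
`x^α`. -/
abbrev ClPoly (m : ℕ) := (Fin m →₀ ℕ) →₀ Cl m

variable {m : ℕ}

noncomputable def e (j : Fin m) : Cl m := ι (negEuclidQ m) (Pi.single j 1)

theorem polar_negEuclidQ (a b : Fin m → ℝ) :
    QuadraticMap.polar (negEuclidQ m) a b = -2 * ∑ j, a j * b j := by
  simp only [QuadraticMap.polar, negEuclidQ, QuadraticMap.weightedSumSquares_apply,
    Finset.mul_sum, ← Finset.sum_sub_distrib, Pi.add_apply, smul_eq_mul]
  exact Finset.sum_congr rfl fun j _ => by ring

theorem negEuclidQ_single (j : Fin m) : negEuclidQ m (Pi.single j 1) = -1 := by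
  simp [negEuclidQ, QuadraticMap.weightedSumSquares_apply, Pi.single_apply]

theorem e_mul_self (j : Fin m) : e j * e j = -1 := by
  rw [e, ι_sq_scalar, negEuclidQ_single, map_neg, map_one]

theorem sum_smul_e (t : Fin m → ℝ) : ∑ j, t j • e j = ι (negEuclidQ m) t := by
  conv_rhs => rw [← Finset.univ_sum_single t]
  rw [map_sum]
  refine Finset.sum_congr rfl fun j _ => ?_
  rw [e, ← map_smul, ← Pi.single_smul', smul_eq_mul, mul_one]

theorem e_mul_ι_mul_e {d : Fin m} {t : Fin m → ℝ} (ht : t d = 0) :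
    e d * ι (negEuclidQ m) t * e d = ι (negEuclidQ m) t := by
  rw [e, ι_mul_ι_mul_ι, polar_negEuclidQ, negEuclidQ_single]
  simp [Pi.single_apply, ht]

noncomputable def eval (x : Fin m → ℝ) : ClPoly m →ₗ[ℝ] Cl m :=
  Finsupp.lsum ℝ fun α => (∏ j, x j ^ α j) • LinearMap.id

noncomputable def lmul : Cl m →ₐ[ℝ] Module.End ℝ (ClPoly m) := Algebra.lsmul ℝ ℝ (ClPoly m)

noncomputable def mulX (j : Fin m) : Module.End ℝ (ClPoly m) :=
  Finsupp.lmapDomain (Cl m) ℝ (· + Finsupp.single j 1)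

noncomputable def mulInner (t : Fin m → ℝ) : Module.End ℝ (ClPoly m) := ∑ j, t j • mulX j

noncomputable def pderiv (j : Fin m) : Module.End ℝ (ClPoly m) :=
  Finsupp.lsum ℝ fun α => (α j : ℝ) • Finsupp.lsingle (α - Finsupp.single j 1)

noncomputable def dirac (m : ℕ) : Module.End ℝ (ClPoly m) := ∑ j, lmul (e j) * pderiv j

/-- Restriction to the hyperplane `x_d = 0`. -/
noncomputable def restrict (d : Fin m) : Module.End ℝ (ClPoly m) where
  toFun c := c.filter (· d = 0)
  map_add' _ _ := Finsupp.filter_add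
  map_smul' _ _ := Finsupp.filter_smul

@[simp] theorem eval_single (x : Fin m → ℝ) (α : Fin m →₀ ℕ) (a : Cl m) :
    eval x (Finsupp.single α a) = (∏ j, x j ^ α j) • a := by
  simp [eval]

@[simp] theorem lmul_single (z : Cl m) (α : Fin m →₀ ℕ) (a : Cl m) :
    lmul z (Finsupp.single α a) = Finsupp.single α (z * a) :=
  Finsupp.smul_single z α a

@[simp] theorem mulX_single (j : Fin m) (α : Fin m →₀ ℕ) (a : Cl m) :
    mulX j (Finsupp.single α a) = Finsupp.single (α + Finsupp.single j 1) a :=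
  Finsupp.mapDomain_single

@[simp] theorem pderiv_single (j : Fin m) (α : Fin m →₀ ℕ) (a : Cl m) :
    pderiv j (Finsupp.single α a) = (α j : ℝ) • Finsupp.single (α - Finsupp.single j 1) a := by
  simp [pderiv]

theorem lmul_apply (z : Cl m) (c : ClPoly m) (β : Fin m →₀ ℕ) : lmul z c β = z * c β := rfl

theorem restrict_apply (d : Fin m) (c : ClPoly m) (β : Fin m →₀ ℕ) :
    restrict d c β = if β d = 0 then c β else 0 := Finsupp.filter_apply _ _ _

theorem eval_lmul (x : Fin m → ℝ) (z : Cl m) (c : ClPoly m) :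
    eval x (lmul z c) = z * eval x c := by
  induction c using Finsupp.induction_linear with
  | zero => simp
  | add f g hf hg => simp only [map_add, hf, hg, mul_add]
  | single α a => rw [lmul_single, eval_single, eval_single, mul_smul_comm]

theorem eval_mulX (x : Fin m → ℝ) (j : Fin m) (c : ClPoly m) :
    eval x (mulX j c) = x j • eval x c := by
  induction c using Finsupp.induction_linear with
  | zero => simp
  | add f g hf hg => simp only [map_add, hf, hg, smul_add]
  | single α a =>
    simp only [mulX_single, eval_single, Finsupp.add_apply, pow_add, Finset.prod_mul_distrib,
      Finsupp.single_apply, pow_ite, pow_one, pow_zero, Finset.prod_ite_eq, Finset.mem_univ,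
      if_true, mul_smul]
    rw [smul_comm]

theorem eval_mulInner (x t : Fin m → ℝ) (c : ClPoly m) :
    eval x (mulInner t c) = (∑ j, x j * t j) • eval x c := by
  simp [mulInner, eval_mulX, smul_smul, Finset.sum_smul, mul_comm]

theorem commute_lmul_mulX (z : Cl m) (j : Fin m) : Commute (lmul z) (mulX j) :=
  (Finsupp.lhom_ext fun α a => by
    rw [Module.End.mul_apply, Module.End.mul_apply, mulX_single, lmul_single, lmul_single,
      mulX_single] : lmul z * mulX j = mulX j * lmul z)

theorem commute_mulX_mulX (i j : Fin m) : Commute (mulX (m := m) i) (mulX j) :=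
  (Finsupp.lhom_ext fun α a => by
    simp only [Module.End.mul_apply, mulX_single, add_right_comm] :
    mulX (m := m) i * mulX j = mulX j * mulX i)

theorem commute_mulInner_mulX (t : Fin m → ℝ) (i : Fin m) : Commute (mulInner t) (mulX i) :=
  Commute.sum_left _ _ _ fun j _ => (commute_mulX_mulX j i).smul_left _

theorem commute_lmul_mulInner (z : Cl m) (t : Fin m → ℝ) : Commute (lmul z) (mulInner t) :=
  Commute.sum_right _ _ _ fun j _ => (commute_lmul_mulX z j).smul_right _

theorem pderiv_mul_mulX (i j : Fin m) :
    pderiv j * mulX i = mulX i * pderiv j + if i = j then 1 else 0 := by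
  refine Finsupp.lhom_ext fun α a => ?_
  simp only [LinearMap.add_apply, Module.End.mul_apply, mulX_single, pderiv_single, map_smul]
  by_cases hα : α j = 0
  · rcases eq_or_ne i j with rfl | hij
    · simp [hα]
    · simp [hα, hij]
  · obtain ⟨β, rfl⟩ := Finsupp.exists_eq_add_single_of_ne_zero hα
    rcases eq_or_ne i j with rfl | hij
    · simp [add_smul]
    · simp [hij, add_right_comm _ (Finsupp.single j 1)]

theorem pderiv_mul_lmul (j : Fin m) (z : Cl m) : pderiv j * lmul z = lmul z * pderiv j :=
  Finsupp.lhom_ext fun α a => by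
    rw [Module.End.mul_apply, Module.End.mul_apply, lmul_single, pderiv_single, pderiv_single,
      map_smul, lmul_single]

theorem pderiv_mul_mulInner (j : Fin m) (t : Fin m → ℝ) :
    pderiv j * mulInner t = mulInner t * pderiv j + t j • 1 := by
  simp only [mulInner, Finset.mul_sum, Finset.sum_mul, mul_smul_comm, smul_mul_assoc,
    pderiv_mul_mulX, smul_add, Finset.sum_add_distrib, smul_ite, smul_zero, Finset.sum_ite_eq',
    Finset.mem_univ, if_true]

noncomputable def pwFactor (d : Fin m) (t : Fin m → ℝ) : Module.End ℝ (ClPoly m) :=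
  mulInner t - mulX d * lmul (ι (negEuclidQ m) t * e d)

noncomputable def pwGrad (d : Fin m) (t : Fin m → ℝ) (j : Fin m) : Cl m :=
  algebraMap ℝ (Cl m) (t j) - if j = d then ι (negEuclidQ m) t * e d else 0

noncomputable def planeWave (d : Fin m) (t : Fin m → ℝ) (k : ℕ) (a : Cl m) : ClPoly m :=
  (pwFactor d t ^ k) (Finsupp.single 0 a)

theorem pderiv_mul_pwFactor (j d : Fin m) (t : Fin m → ℝ) :
    pderiv j * pwFactor d t = pwFactor d t * pderiv j + lmul (pwGrad d t j) := by
  have hX : pderiv j * (mulX d * lmul (ι (negEuclidQ m) t * e d))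
      = mulX d * lmul (ι (negEuclidQ m) t * e d) * pderiv j
        + if d = j then lmul (ι (negEuclidQ m) t * e d) else 0 := by
    rw [← mul_assoc, pderiv_mul_mulX, add_mul, mul_assoc, pderiv_mul_lmul, ← mul_assoc,
      ite_mul, one_mul, zero_mul]
  rw [pwFactor, mul_sub (α := Module.End ℝ (ClPoly m)), sub_mul (α := Module.End ℝ (ClPoly m)),
    pderiv_mul_mulInner, hX, pwGrad, map_sub, apply_ite lmul, map_zero,
    AlgHom.commutes, Algebra.algebraMap_eq_smul_one]
  simp only [eq_comm (a := d)]
  abel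

theorem commute_lmul_pwFactor {d : Fin m} {t : Fin m → ℝ} {z : Cl m}
    (hz : Commute z (ι (negEuclidQ m) t * e d)) : Commute (lmul z) (pwFactor d t) := by
  unfold pwFactor Commute SemiconjBy
  rw [mul_sub (α := Module.End ℝ (ClPoly m)), sub_mul (α := Module.End ℝ (ClPoly m)),
    (commute_lmul_mulInner z t).eq, ((commute_lmul_mulX z d).mul_right (hz.map lmul)).eq]

theorem commute_pwGrad (d : Fin m) (t : Fin m → ℝ) (j : Fin m) :
    Commute (pwGrad d t j) (ι (negEuclidQ m) t * e d) := by
  refine (Algebra.commute_algebraMap_left _ _).sub_left ?_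
  split_ifs
  exacts [Commute.refl _, Commute.zero_left _]

@[simp] theorem pderiv_single_zero (j : Fin m) (a : Cl m) :
    pderiv j (Finsupp.single 0 a) = 0 := by
  simp

theorem pderiv_planeWave_succ (j d : Fin m) (t : Fin m → ℝ) (k : ℕ) (a : Cl m) :
    pderiv j (planeWave d t (k + 1) a) = (k + 1) • lmul (pwGrad d t j) (planeWave d t k a) := by
  have := mul_pow_succ_eq_of_mul_eq_add (pderiv_mul_pwFactor j d t)
    (commute_lmul_pwFactor (commute_pwGrad d t j)) k
  rw [planeWave, ← Module.End.mul_apply, this, LinearMap.add_apply, Module.End.mul_apply,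
    pderiv_single_zero, map_zero, zero_add, LinearMap.smul_apply, Module.End.mul_apply, planeWave]

theorem sum_e_mul_pwGrad {d : Fin m} {t : Fin m → ℝ} (ht : t d = 0) :
    ∑ j, e j * pwGrad d t j = 0 := by
  simp only [pwGrad, mul_sub, Finset.sum_sub_distrib, ← Algebra.commutes, ← Algebra.smul_def,
    sum_smul_e, mul_ite, mul_zero, Finset.sum_ite_eq', Finset.mem_univ, if_true, ← mul_assoc,
    e_mul_ι_mul_e ht, sub_self]

theorem dirac_planeWave {d : Fin m} {t : Fin m → ℝ} (ht : t d = 0) (k : ℕ) (a : Cl m) :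
    dirac m (planeWave d t k a) = 0 := by
  cases k with
  | zero => simp [dirac, planeWave]
  | succ k =>
    simp only [dirac, LinearMap.sum_apply, Module.End.mul_apply, pderiv_planeWave_succ,
      map_nsmul]
    simp only [← Module.End.mul_apply, ← map_mul]
    rw [← Finset.smul_sum, ← LinearMap.sum_apply, ← map_sum, sum_e_mul_pwGrad ht, map_zero,
      LinearMap.zero_apply, smul_zero]

theorem eval_pwFactor (x : Fin m → ℝ) (d : Fin m) (t : Fin m → ℝ) (c : ClPoly m) :
    eval x (pwFactor d t c)
      = ((∑ j, x j * t j) • 1 - x d • (ι (negEuclidQ m) t * e d)) * eval x c := by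
  rw [pwFactor, LinearMap.sub_apply, Module.End.mul_apply, map_sub, eval_mulInner, eval_mulX,
    eval_lmul, sub_mul, smul_mul_assoc, smul_mul_assoc, one_mul]

theorem eval_planeWave (x : Fin m → ℝ) (d : Fin m) (t : Fin m → ℝ) (k : ℕ) (a : Cl m) :
    eval x (planeWave d t k a)
      = ((∑ j, x j * t j) • 1 - x d • (ι (negEuclidQ m) t * e d)) ^ k * a := by
  induction k with
  | zero => simp [planeWave]
  | succ k ih =>
    rw [planeWave, pow_succ', Module.End.mul_apply, eval_pwFactor, ← planeWave, ih, pow_succ',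
      mul_assoc]

@[simp] theorem restrict_single (d : Fin m) (α : Fin m →₀ ℕ) (a : Cl m) :
    restrict d (Finsupp.single α a) = if α d = 0 then Finsupp.single α a else 0 := by
  ext β
  rw [restrict_apply]
  by_cases h : α = β
  · subst h; split_ifs <;> simp
  · split_ifs <;> simp [h]

theorem restrict_mul_mulX_self (d : Fin m) : restrict d * mulX d = 0 :=
  Finsupp.lhom_ext fun α a => by simp

theorem restrict_mul_mulX_of_ne {i d : Fin m} (h : i ≠ d) :
    restrict d * mulX i = mulX i * restrict d :=
  Finsupp.lhom_ext fun α a => by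
    by_cases hα : α d = 0 <;> simp [hα, h]

theorem restrict_mul_mulInner {d : Fin m} {t : Fin m → ℝ} (ht : t d = 0) :
    restrict d * mulInner t = mulInner t * restrict d := by
  simp only [mulInner, Finset.mul_sum, Finset.sum_mul, mul_smul_comm, smul_mul_assoc]
  refine Finset.sum_congr rfl fun i _ => ?_
  rcases eq_or_ne i d with rfl | h
  · simp [ht]
  · rw [restrict_mul_mulX_of_ne h]

theorem restrict_mul_pwFactor {d : Fin m} {t : Fin m → ℝ} (ht : t d = 0) :
    restrict d * pwFactor d t = mulInner t * restrict d := by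
  rw [pwFactor, mul_sub (α := Module.End ℝ (ClPoly m)), restrict_mul_mulInner ht, ← mul_assoc,
    restrict_mul_mulX_self, zero_mul, sub_zero (G := Module.End ℝ (ClPoly m))]

noncomputable def powInner (t : Fin m → ℝ) (k : ℕ) (a : Cl m) : ClPoly m :=
  (mulInner t ^ k) (Finsupp.single 0 a)

theorem restrict_planeWave {d : Fin m} {t : Fin m → ℝ} (ht : t d = 0) (k : ℕ) (a : Cl m) :
    restrict d (planeWave d t k a) = powInner t k a := by
  have : restrict d * pwFactor d t ^ k = mulInner t ^ k * restrict d :=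
    (SemiconjBy.pow_right (restrict_mul_pwFactor ht) k : _)
  rw [planeWave, ← Module.End.mul_apply, this, Module.End.mul_apply, restrict_single,
    if_pos (Finsupp.zero_apply ..), powInner]

theorem pderiv_apply (j : Fin m) (c : ClPoly m) (β : Fin m →₀ ℕ) :
    pderiv j c β = (β j + 1 : ℝ) • c (β + Finsupp.single j 1) := by
  induction c using Finsupp.induction_linear with
  | zero => simp
  | add f g hf hg => simp only [map_add, Finsupp.add_apply, hf, hg, smul_add]
  | single α a =>
    by_cases hα : α j = 0
    · have : α ≠ β + Finsupp.single j 1 := fun h => by simp [h] at hα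
      simp [hα, this]
    · obtain ⟨γ, rfl⟩ := Finsupp.exists_eq_add_single_of_ne_zero hα
      by_cases h : γ = β
      · subst h; simp
      · simp [h]

theorem dirac_apply (c : ClPoly m) (β : Fin m →₀ ℕ) :
    dirac m c β = ∑ j, e j * ((β j + 1 : ℝ) • c (β + Finsupp.single j 1)) := by
  simp [dirac, Finsupp.finsetSum_apply, lmul_apply, pderiv_apply]

theorem eq_zero_of_dirac_eq_zero_of_restrict_eq_zero {c : ClPoly m} (d : Fin m)
    (hD : dirac m c = 0) (hR : restrict d c = 0) : c = 0 := by
  suffices ∀ n β, β d = n → c β = 0 from Finsupp.ext fun β => this _ β rfl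
  intro n
  induction n with
  | zero => intro β hβ; simpa [restrict_apply, hβ] using DFunLike.congr_fun hR β
  | succ n ih =>
    intro β hβ
    obtain ⟨γ, rfl⟩ := Finsupp.exists_eq_add_single_of_ne_zero (α := β) (j := d) (by omega)
    have hγ : γ d = n := by simpa using hβ
    have h := DFunLike.congr_fun hD γ
    rw [dirac_apply, Finset.sum_eq_single d (fun j _ hj => by
      rw [ih _ (by simp [hj, hγ]), smul_zero, mul_zero]) (by simp)] at h
    have := congrArg (e d * ·) h
    simp only [Finsupp.coe_zero, Pi.zero_apply, mul_zero, ← mul_assoc, e_mul_self, neg_one_mul,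
      neg_eq_zero] at this
    exact (smul_eq_zero.mp this).resolve_left (by positivity)

theorem eq_zero_of_forall_eval_eq_zero {c : ClPoly m} (h : ∀ x, eval x c = 0) : c = 0 := by
  ext α
  rw [Finsupp.coe_zero, Pi.zero_apply, ← Module.forall_dual_apply_eq_zero_iff ℝ]
  intro φ
  have hp : (∑ β ∈ c.support, MvPolynomial.monomial β (φ (c β))) = 0 :=
    MvPolynomial.funext fun x => by
      simpa [eval, Finsupp.sum, MvPolynomial.eval_monomial, Finsupp.prod_pow, mul_comm]
        using congrArg φ (h x)
  have hα := congrArg (MvPolynomial.coeff α) hp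
  simp only [MvPolynomial.coeff_sum, MvPolynomial.coeff_monomial, Finset.sum_ite_eq',
    MvPolynomial.coeff_zero] at hα
  by_cases hc : c α = 0
  · rw [hc, map_zero]
  · rwa [if_pos (Finsupp.mem_support_iff.mpr hc)] at hα

theorem hasDerivAt_prod_update_pow (x : Fin m → ℝ) (α : Fin m →₀ ℕ) (j : Fin m) :
    HasDerivAt (fun u => ∏ i, Function.update x j u i ^ α i)
      (α j * ∏ i, x i ^ (α - Finsupp.single j 1 : Fin m →₀ ℕ) i) (x j) := by
  have hsplit : ∀ u, ∏ i, Function.update x j u i ^ α i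
      = u ^ α j * ∏ i ∈ Finset.univ.erase j, x i ^ α i := fun u => by
    rw [← Finset.mul_prod_erase _ _ (Finset.mem_univ j), Function.update_self]
    congr 1
    exact Finset.prod_congr rfl fun i hi => by
      rw [Function.update_of_ne (Finset.ne_of_mem_erase hi)]
  simp only [hsplit]
  refine ((hasDerivAt_pow (α j) (x j)).mul_const _).congr_deriv ?_
  rw [← Finset.mul_prod_erase _ _ (Finset.mem_univ j), ← mul_assoc]
  congr 1
  · simp
  · exact Finset.prod_congr rfl fun i hi => by
      simp [(Finset.ne_of_mem_erase hi).symm]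

theorem hasDerivAt_eval_update (φ : Cl m →ₗ[ℝ] ℝ) (c : ClPoly m) (x : Fin m → ℝ) (j : Fin m) :
    HasDerivAt (fun u => φ (eval (Function.update x j u) c)) (φ (eval x (pderiv j c))) (x j) := by
  induction c using Finsupp.induction_linear with
  | zero => simpa using hasDerivAt_const (x j) (0 : ℝ)
  | add f g hf hg =>
    simp only [map_add]
    exact hf.add hg
  | single α a =>
    simp only [eval_single, pderiv_single, map_smul, smul_eq_mul]
    exact ((hasDerivAt_prod_update_pow x α j).mul_const (φ a)).congr_deriv (by ring)

theorem dirac_eq_zero_of_isMonogenic {M : (Fin m → ℝ) → Cl m} {c : ClPoly m}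
    (hMc : ∀ x, M x = eval x c) (hM : IsMonogenic m M) : dirac m c = 0 := by
  obtain ⟨g, hg, hsum⟩ := hM
  have hg' : ∀ j x, g j x = eval x (pderiv j c) := fun j x => by
    rw [← sub_eq_zero, ← Module.forall_dual_apply_eq_zero_iff ℝ]
    intro φ
    rw [map_sub, ← hg j x φ, sub_eq_zero]
    simp only [hMc]
    exact (hasDerivAt_eval_update φ c x j).deriv
  refine eq_zero_of_forall_eval_eq_zero fun x => ?_
  simpa [dirac, eval_lmul, ← hg', e] using hsum x

theorem mulInner_add_smul_single (t : Fin m → ℝ) (r : ℝ) (i : Fin m) :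
    mulInner (t + r • Pi.single i 1) = mulInner t + r • mulX i := by
  simp [mulInner, add_smul, Finset.sum_add_distrib, Pi.single_apply, ite_smul]

theorem mulX_powInner_mem_span {d i : Fin m} (hi : i ≠ d) {t : Fin m → ℝ} (ht : t d = 0)
    (k : ℕ) (a : Cl m) :
    mulX i (powInner t k a)
      ∈ Submodule.span ℝ {w | ∃ s b, s d = 0 ∧ powInner s (k + 1) b = w} := by
  set U := Submodule.span ℝ {w | ∃ s b, s d = 0 ∧ powInner s (k + 1) b = w}
  have hr : ∀ r : ℝ, ∑ l ∈ Finset.range (k + 2), r ^ l • ((mulX i ^ l * mulInner t ^ (k + 1 - l)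
      * ((k + 1).choose l : Module.End ℝ (ClPoly m))) (Finsupp.single 0 a)) ∈ U := fun r => by
    have hmem : powInner (t + r • Pi.single i 1) (k + 1) a ∈ U :=
      Submodule.subset_span ⟨_, a, by simp [ht, hi.symm], rfl⟩
    rw [powInner, mulInner_add_smul_single, add_comm,
      (((commute_mulInner_mulX t i).symm.smul_left r).add_pow)] at hmem
    simpa [LinearMap.sum_apply, smul_pow, smul_mul_assoc] using hmem
  have h1 := U.mem_of_forall_sum_pow_smul_mem hr (l := 1) (by omega)
  simp only [pow_one, Nat.add_sub_cancel, Nat.choose_one_right, Module.End.mul_apply,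
    Module.End.natCast_apply, ← Nat.cast_smul_eq_nsmul ℝ, map_smul] at h1
  exact (U.smul_mem_iff (by positivity)).mp h1

theorem single_mem_span_powInner {d : Fin m} (k : ℕ) {α : Fin m →₀ ℕ} (hk : ∑ j, α j = k)
    (hα : α d = 0) (a : Cl m) :
    Finsupp.single α a ∈ Submodule.span ℝ {w | ∃ t b, t d = 0 ∧ powInner t k b = w} := by
  induction k generalizing α with
  | zero =>
    obtain rfl : α = 0 :=
      Finsupp.ext fun j => Finset.sum_eq_zero_iff.mp hk j (Finset.mem_univ j)
    exact Submodule.subset_span ⟨0, a, rfl, by simp [powInner]⟩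
  | succ k ih =>
    obtain ⟨i, hi⟩ : ∃ i, α i ≠ 0 := by
      by_contra! h
      simp [h] at hk
    have hid : i ≠ d := by
      rintro rfl
      exact hi hα
    obtain ⟨β, rfl⟩ := Finsupp.exists_eq_add_single_of_ne_zero hi
    have hβk : ∑ j, β j = k := by
      simp [Finset.sum_add_distrib] at hk
      omega
    have hmulX : Submodule.span ℝ {w | ∃ t b, t d = 0 ∧ powInner t k b = w}
        ≤ (Submodule.span ℝ {w | ∃ t b, t d = 0 ∧ powInner t (k + 1) b = w}).comap (mulX i) :=
      Submodule.span_le.mpr fun w ⟨t, b, ht, hw⟩ => hw ▸ mulX_powInner_mem_span hid ht k b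
    rw [← mulX_single]
    exact hmulX (ih hβk (by simpa [hid.symm] using hα))

theorem pwFactor_smul (d : Fin m) (r : ℝ) (t : Fin m → ℝ) :
    pwFactor d (r • t) = r • pwFactor d t := by
  have hinner : mulInner (r • t) = r • mulInner (m := m) t := by
    simp [mulInner, Finset.smul_sum, smul_smul]
  rw [pwFactor, pwFactor, hinner, map_smul, smul_mul_assoc, map_smul, mul_smul_comm]
  exact (smul_sub r (mulInner t) (mulX d * lmul (ι (negEuclidQ m) t * e d))).symm

theorem planeWave_smul (d : Fin m) (r : ℝ) (t : Fin m → ℝ) (k : ℕ) (a : Cl m) :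
    planeWave d (r • t) k a = planeWave d t k (r ^ k • a) := by
  rw [planeWave, pwFactor_smul, smul_pow, LinearMap.smul_apply, planeWave, ← Finsupp.smul_single,
    map_smul]

theorem exists_unit_planeWave_eq (hm : 2 ≤ m) {d : Fin m} {t : Fin m → ℝ} (ht : t d = 0) (k : ℕ)
    (a : Cl m) : ∃ s b, s d = 0 ∧ ∑ j, s j ^ 2 = 1 ∧ planeWave d t k a = planeWave d s k b := by
  by_cases h0 : t = 0
  · subst h0
    have : Nontrivial (Fin m) := Fin.nontrivial_iff_two_le.mpr hm
    obtain ⟨i, hi⟩ := exists_ne d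
    refine ⟨Pi.single i 1, (0 : ℝ) ^ k • a, by simp [hi.symm], by simp [Pi.single_apply], ?_⟩
    rw [← planeWave_smul, zero_smul]
  · have hpos : 0 < ∑ j, t j ^ 2 := by
      obtain ⟨j, hj⟩ := Function.ne_iff.mp h0
      have hj : t j ≠ 0 := hj
      exact Finset.sum_pos' (fun _ _ => sq_nonneg _) ⟨j, Finset.mem_univ j, by positivity⟩
    set r := √(∑ j, t j ^ 2)
    have hr : r ≠ 0 := (Real.sqrt_pos.mpr hpos).ne'
    refine ⟨r⁻¹ • t, r ^ k • a, by simp [ht], ?_, ?_⟩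
    · simp [mul_pow, ← Finset.mul_sum, r, Real.sq_sqrt hpos.le, hpos.ne']
    · rw [planeWave_smul, smul_smul, ← mul_pow, inv_mul_cancel₀ hr, one_pow, one_smul]

theorem mem_span_planeWave {c : ClPoly m} (d : Fin m) {k : ℕ} (hD : dirac m c = 0)
    (hdeg : ∀ α ∈ c.support, ∑ j, α j = k) :
    c ∈ Submodule.span ℝ {w | ∃ t a, t d = 0 ∧ planeWave d t k a = w} := by
  set W := Submodule.span ℝ {w | ∃ t a, t d = 0 ∧ planeWave d t k a = w}
  have hW : W ≤ LinearMap.ker (dirac m) := by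
    rw [Submodule.span_le]
    rintro _ ⟨t, a, ht, rfl⟩
    exact dirac_planeWave ht k a
  have hR : restrict d c ∈ W.map (restrict d) := by
    rw [Submodule.map_span]
    refine Submodule.span_mono (s := {w | ∃ t b, t d = 0 ∧ powInner t k b = w}) ?_ ?_
    · rintro _ ⟨t, a, ht, rfl⟩
      exact ⟨_, ⟨t, a, ht, rfl⟩, restrict_planeWave ht k a⟩
    rw [← Finsupp.sum_single (restrict d c)]
    refine Submodule.finsuppSum_mem _ _ _ _ fun α hα => ?_
    rw [restrict_apply] at hα
    split_ifs at hα with hαd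
    · exact single_mem_span_powInner k (hdeg α (Finsupp.mem_support_iff.mpr hα)) hαd _
    · exact absurd rfl hα
  obtain ⟨w, hw, hwc⟩ := hR
  have : c - w = 0 := eq_zero_of_dirac_eq_zero_of_restrict_eq_zero d
    (by rw [map_sub, hD, LinearMap.mem_ker.mp (hW hw), sub_zero]) (by rw [map_sub, hwc, sub_self])
  rwa [sub_eq_zero.mp this]

theorem exists_eq_sum_planeWave (hm : 2 ≤ m) {c : ClPoly m} (d : Fin m) {k : ℕ}
    (hD : dirac m c = 0) (hdeg : ∀ α ∈ c.support, ∑ j, α j = k) :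
    ∃ (n : ℕ) (t : Fin n → Fin m → ℝ) (a : Fin n → Cl m), (∀ i, t i d = 0) ∧
      (∀ i, ∑ j, t i j ^ 2 = 1) ∧ c = ∑ i, planeWave d (t i) k (a i) := by
  obtain ⟨n, f, g, hfg⟩ := Submodule.mem_span_set'.mp (mem_span_planeWave d hD hdeg)
  have : ∀ i, ∃ s b, s d = 0 ∧ ∑ j, s j ^ 2 = 1 ∧ f i • (g i : ClPoly m) = planeWave d s k b := by
    intro i
    obtain ⟨t, a, ht, hg⟩ := (g i).2
    rw [← hg, planeWave, ← map_smul, Finsupp.smul_single, ← planeWave]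
    exact exists_unit_planeWave_eq hm ht k _
  choose s b hs0 hs1 hsb using this
  exact ⟨n, s, b, hs0, hs1, by rw [← hfg]; exact Finset.sum_congr rfl fun i _ => hsb i⟩

end CliffordPoly

/-- Plane waves span the spherical monogenics: for `m ≥ 2`, every monogenic Clifford-valued
polynomial map homogeneous of degree `k` is a finite right-linear combination of monogenic
plane waves `(⟨x,tᵢ⟩·1 - ι(tᵢ)ι(sᵢ)·⟨x,sᵢ⟩)^k · cᵢ` with `tᵢ, sᵢ` orthonormal. -/
theorem planeWaves_span_monogenics (m k : ℕ) (hm : 2 ≤ m)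
    (M : (Fin m → ℝ) → CliffordAlgebra (negEuclidQ m))
    (hM : IsHomogPolyMap m k M) (hMono : IsMonogenic m M) :
    ∃ (n : ℕ) (t s : Fin n → Fin m → ℝ) (c : Fin n → CliffordAlgebra (negEuclidQ m)),
      (∀ i, ∑ j, t i j ^ 2 = 1) ∧ (∀ i, ∑ j, s i j ^ 2 = 1) ∧
      (∀ i, ∑ j, t i j * s i j = 0) ∧
      ∀ x, M x = ∑ i, ((∑ j, x j * t i j) • (1 : CliffordAlgebra (negEuclidQ m))
        - (∑ j, x j * s i j) • (ι (negEuclidQ m) (t i) * ι (negEuclidQ m) (s i))) ^ k * c i := by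
  obtain ⟨c, hdeg, hMc⟩ := hM
  replace hMc : ∀ x, M x = CliffordPoly.eval x c := hMc
  let d : Fin m := ⟨0, by omega⟩
  obtain ⟨n, t, a, ht0, ht1, hc⟩ :=
    CliffordPoly.exists_eq_sum_planeWave hm d (CliffordPoly.dirac_eq_zero_of_isMonogenic hMc hMono)
      hdeg
  refine ⟨n, t, fun _ => Pi.single d 1, a, ht1, fun _ => by simp [Pi.single_apply],
    fun i => by simp [Pi.single_apply, ht0 i], fun x => ?_⟩
  rw [hMc, hc, map_sum]
  refine Finset.sum_congr rfl fun i _ => ?_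
  simp [CliffordPoly.eval_planeWave, Pi.single_apply, CliffordPoly.e]
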